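/- arXiv:1807.08444 — 3 statements merged into one kernel-verified Lean document; each statement's English description precedes it below -/
import Mathlib

section
/- Define T_{n,q} = ∫₀¹ αⁿ R(α)^q dα where R(α)² = ‖x̂ − y₀ + α v‖² + ε², L = ‖v‖ > 0. Then for every integer n ≥ 1 and real q ≠ −2, the recursion T_{n,q} = [α^{n−1} R(α)^{q+2}/((q+2)L²)]₀¹ − ((n−1)/((q+2)L²)) T_{n−2,q+2} − ((x₀·v)/L²) T_{n−1,q} holds, where the term with T_{n−2,q+2} is absent when n = 1. -/
/-!
With `R(α)² = ‖x₀ + α v‖² + ε²` one has `(R²)' = 2 (x₀·v + α L²)`, hence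
`(R^{q+2})' = (q+2) (x₀·v + α L²) R^q`. Integrating `(α^{n-1} R^{q+2})'` over `[0,1]` and
solving for the term `(q+2) L² T_{n,q}` gives the recursion.
-/

open scoped RealInnerProductSpace
open intervalIntegral

theorem hasDerivAt_norm_add_smul_sq {E : Type*} [NormedAddCommGroup E] [InnerProductSpace ℝ E]
    (x₀ v : E) (α : ℝ) :
    HasDerivAt (fun t : ℝ => ‖x₀ + t • v‖ ^ 2) (2 * (⟪x₀, v⟫ + α * ‖v‖ ^ 2)) α := by
  have hline : HasDerivAt (fun t : ℝ => x₀ + t • v) v α :=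
    ((hasDerivAt_id α).smul_const v).const_add x₀ |>.congr_deriv (one_smul ℝ v)
  convert hline.norm_sq using 2
  rw [inner_add_left, real_inner_smul_left, real_inner_self_eq_norm_sq]

section SqDeriv

variable {r : ℝ → ℝ} {a b : ℝ}

/-- Writing `r ^ p = (r ^ 2) ^ (p / 2)` reduces the derivative of `r ^ p` to that of `r ^ 2`. -/
theorem hasDerivAt_rpow_of_hasDerivAt_sq (hr : ∀ t, 0 < r t) {d α : ℝ}
    (h : HasDerivAt (fun t => r t ^ 2) (2 * d) α) (p : ℝ) :
    HasDerivAt (fun t => r t ^ p) (p * d * r α ^ (p - 2)) α := by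
  have hpow : ∀ t, r t ^ p = (r t ^ 2) ^ (p / 2) := fun t => by
    rw [← Real.rpow_natCast, ← Real.rpow_mul (hr t).le]
    ring_nf
  have hsq : (r α ^ 2) ^ (p / 2 - 1) = r α ^ (p - 2) := by
    rw [← Real.rpow_natCast, ← Real.rpow_mul (hr α).le]
    ring_nf
  simp only [hpow]
  convert h.rpow_const (p := p / 2) (Or.inl (pow_pos (hr α) 2).ne') using 1
  rw [hsq]
  ring

variable (hr : ∀ t, 0 < r t) (hr2 : ∀ α, HasDerivAt (fun t => r t ^ 2) (2 * (b + a * α)) α)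
include hr hr2

theorem continuous_rpow_of_hasDerivAt_sq (p : ℝ) : Continuous fun t => r t ^ p :=
  continuous_iff_continuousAt.2 fun α =>
    (hasDerivAt_rpow_of_hasDerivAt_sq hr (hr2 α) p).continuousAt

theorem intervalIntegrable_pow_mul_rpow_of_hasDerivAt_sq (m : ℕ) (p s t : ℝ) :
    IntervalIntegrable (fun α => α ^ m * r α ^ p) MeasureTheory.volume s t :=
  ((continuous_pow m).mul (continuous_rpow_of_hasDerivAt_sq hr hr2 p)).intervalIntegrable s t

theorem pow_mul_rpow_sub_eq_integral_of_hasDerivAt_sq (m : ℕ) (p s t : ℝ) :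
    t ^ m * r t ^ p - s ^ m * r s ^ p =
      m * (∫ α in s..t, α ^ (m - 1) * r α ^ p)
        + p * (b * (∫ α in s..t, α ^ m * r α ^ (p - 2))
          + a * ∫ α in s..t, α ^ (m + 1) * r α ^ (p - 2)) := by
  have hint := intervalIntegrable_pow_mul_rpow_of_hasDerivAt_sq hr hr2 (s := s) (t := t)
  have hderiv : ∀ α, HasDerivAt (fun t => t ^ m * r t ^ p)
      (m * (α ^ (m - 1) * r α ^ p)
        + p * (b * (α ^ m * r α ^ (p - 2)) + a * (α ^ (m + 1) * r α ^ (p - 2)))) α := fun α =>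
    ((hasDerivAt_pow m α).mul (hasDerivAt_rpow_of_hasDerivAt_sq hr (hr2 α) p)).congr_deriv
      (by ring)
  rw [← integral_eq_sub_of_hasDerivAt (fun α _ => hderiv α)
      (((hint _ _).const_mul _).add
        ((((hint _ _).const_mul _).add ((hint _ _).const_mul _)).const_mul _)),
    integral_add ((hint _ _).const_mul _)
      ((((hint _ _).const_mul _).add ((hint _ _).const_mul _)).const_mul _),
    integral_const_mul, integral_const_mul,
    integral_add ((hint _ _).const_mul _) ((hint _ _).const_mul _),
    integral_const_mul, integral_const_mul]

end SqDeriv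

/-- The recursion for T_{n,q} = ∫₀¹ αⁿ R(α)^q dα, for n ≥ 1, q ≠ −2.
    (The term with T_{n−2,q+2} carries the coefficient n−1 and is absent for n = 1.) -/
theorem stokeslet_segment_Tnq_recursion
    (y₀ v xhat : EuclideanSpace ℝ (Fin 3)) (ε : ℝ) (hε : 0 < ε)
    (hv : 0 < ‖v‖)
    (x : ℝ → EuclideanSpace ℝ (Fin 3)) (hx : ∀ α, x α = xhat - y₀ + α • v)
    (R : ℝ → ℝ) (hR : ∀ α, R α = Real.sqrt (‖x α‖ ^ 2 + ε ^ 2))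
    (T : ℕ → ℝ → ℝ)
    (hT : ∀ (n : ℕ) (q : ℝ), T n q = ∫ α in (0:ℝ)..1, α ^ n * R α ^ q)
    (n : ℕ) (hn : 1 ≤ n) (q : ℝ) (hq : q ≠ -2) :
    T n q =
      ((1:ℝ) ^ (n - 1) * R 1 ^ (q + 2) - (0:ℝ) ^ (n - 1) * R 0 ^ (q + 2))
          / ((q + 2) * ‖v‖ ^ 2)
        - ((n : ℝ) - 1) / ((q + 2) * ‖v‖ ^ 2) * T (n - 2) (q + 2)
        - ⟪x 0, v⟫ / ‖v‖ ^ 2 * T (n - 1) q := by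
  have hxα : ∀ α, x α = x 0 + α • v := fun α => by simp [hx]
  have hRsq : ∀ α, R α ^ 2 = ‖x 0 + α • v‖ ^ 2 + ε ^ 2 := fun α => by
    rw [hR, Real.sq_sqrt (by positivity), hxα]
  have hRpos : ∀ α, 0 < R α := fun α => by rw [hR]; positivity
  have hR2 : ∀ α, HasDerivAt (fun t => R t ^ 2) (2 * (⟪x 0, v⟫ + ‖v‖ ^ 2 * α)) α := fun α => by
    simp only [hRsq]
    exact ((hasDerivAt_norm_add_smul_sq (x 0) v α).add_const _).congr_deriv (by ring)
  obtain ⟨m, rfl⟩ := Nat.exists_eq_add_of_le' hn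
  have hparts := pow_mul_rpow_sub_eq_integral_of_hasDerivAt_sq hRpos hR2 m (q + 2) 0 1
  rw [add_sub_cancel_right] at hparts
  have hq2 : q + 2 ≠ 0 := fun h => hq (by linarith)
  simp only [hT, Nat.add_sub_cancel, show m + 1 - 2 = m - 1 by omega]
  push_cast
  field_simp
  linear_combination -hparts
end

section
/- The regularized Stokeslet velocity field u(x) = (1/(8πμ)) [ (1/R₀ + ε²/R₀³) f + ((f·x) x)/R₀³ ], where R₀ = √(‖x‖² + ε²), is divergence-free on ℝ³: ∇·u = 0 everywhere. -/
/-!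
Write `u = c (A(|x|²) f + B(|x|²) (f·x) x)` with `A = 1/R + ε²/R³`, `B = 1/R³` and
`R² = |x|² + ε²`.
For any profiles `A`, `B` on `ℝⁿ` the product and chain rules give
`div u = c (f·x) (2A' + 2B'|x|² + (n+1) B)`. Since `dR/d(|x|²) = 1/(2R)`, in dimension three
the bracket is `(-1/R³ - 3ε²/R⁵) - 3|x|²/R⁵ + 4/R³ = 3/R³ - 3R²/R⁵ = 0`.
-/

open ContinuousLinearMap

section
variable {n : ℕ}

theorem sum_smul_proj_apply_single (a : Fin n → ℝ) (i : Fin n) :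
    (∑ j, a j • proj j : (Fin n → ℝ) →L[ℝ] ℝ) (Pi.single i 1) = a i := by
  simp [Pi.single_apply]

theorem hasFDerivAt_sum_mul (f x : Fin n → ℝ) :
    HasFDerivAt (fun y : Fin n → ℝ => ∑ j, f j * y j)
      (∑ j, f j • proj j : (Fin n → ℝ) →L[ℝ] ℝ) x :=
  HasFDerivAt.fun_sum fun j _ => (hasFDerivAt_apply j x).const_mul (f j)

theorem hasFDerivAt_sum_sq (x : Fin n → ℝ) :
    HasFDerivAt (fun y : Fin n → ℝ => ∑ j, y j ^ 2)
      (∑ j, (2 * x j) • proj j : (Fin n → ℝ) →L[ℝ] ℝ) x := by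
  refine HasFDerivAt.fun_sum fun j _ => ?_
  have hj : HasFDerivAt (fun y : Fin n → ℝ => y j) (proj j : (Fin n → ℝ) →L[ℝ] ℝ) x :=
    hasFDerivAt_apply j x
  exact (hj.pow 2).congr_fderiv (by norm_num)

noncomputable def divergence (u : (Fin n → ℝ) → Fin n → ℝ) (x : Fin n → ℝ) : ℝ :=
  ∑ i, fderiv ℝ (fun y => u y i) x (Pi.single i 1)

def isotropicTensorField (A B : ℝ → ℝ) (f y : Fin n → ℝ) (i : Fin n) : ℝ :=
  A (∑ j, y j ^ 2) * f i + B (∑ j, y j ^ 2) * (∑ j, f j * y j) * y i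

variable {A B : ℝ → ℝ} {A' B' : ℝ} {f x : Fin n → ℝ}

theorem fderiv_isotropicTensorField_apply_single (hA : HasDerivAt A A' (∑ j, x j ^ 2))
    (hB : HasDerivAt B B' (∑ j, x j ^ 2)) (i : Fin n) :
    fderiv ℝ (fun y => isotropicTensorField A B f y i) x (Pi.single i 1) =
      2 * A' * (f i * x i) + 2 * B' * x i ^ 2 * ∑ j, f j * x j
        + B (∑ j, x j ^ 2) * (f i * x i + ∑ j, f j * x j) := by
  have hq := hasFDerivAt_sum_sq x
  have hyi : HasFDerivAt (fun y : Fin n → ℝ => y i) (proj i : (Fin n → ℝ) →L[ℝ] ℝ) x :=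
    hasFDerivAt_apply i x
  have hF : HasFDerivAt (fun y => isotropicTensorField A B f y i) _ x :=
    ((hA.comp_hasFDerivAt x hq).mul_const (f i)).add
      (((hB.comp_hasFDerivAt x hq).mul (hasFDerivAt_sum_mul f x)).mul hyi)
  rw [hF.fderiv]
  simp only [add_apply, smul_apply, sum_smul_proj_apply_single, proj_apply,
    Pi.single_eq_same, Function.comp_apply, Pi.mul_apply, smul_eq_mul]
  ring

theorem divergence_isotropicTensorField (hA : HasDerivAt A A' (∑ j, x j ^ 2))
    (hB : HasDerivAt B B' (∑ j, x j ^ 2)) :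
    divergence (isotropicTensorField A B f) x =
      (∑ j, f j * x j) * (2 * A' + 2 * B' * (∑ j, x j ^ 2) + (n + 1) * B (∑ j, x j ^ 2)) := by
  simp only [divergence, fderiv_isotropicTensorField_apply_single hA hB, Finset.sum_add_distrib,
    ← Finset.mul_sum, ← Finset.sum_mul, Finset.sum_const, Finset.card_univ, Fintype.card_fin,
    nsmul_eq_mul]
  ring

end

theorem hasDerivAt_inv_sqrt_pow (k : ℕ) {s : ℝ} (hs : 0 < s) :
    HasDerivAt (fun t => (√t ^ k)⁻¹) (-(k / 2) * (√s ^ (k + 2))⁻¹) s := by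
  have hr : 0 < √s := Real.sqrt_pos.2 hs
  have hsqrt : HasDerivAt (fun t => √t) (1 / (2 * √s)) s := Real.hasDerivAt_sqrt hs.ne'
  refine (((hasDerivAt_pow k √s).comp s hsqrt).inv (pow_ne_zero k hr.ne')).congr_deriv ?_
  rcases k with _ | k
  · simp
  · simp only [Nat.add_sub_cancel, Function.comp_apply]
    field_simp
    ring

theorem regularized_stokeslet_div_free_general
    (μ ε : ℝ) (hε : 0 < ε) (f : Fin 3 → ℝ)
    (R₀ : (Fin 3 → ℝ) → ℝ)
    (hR : ∀ x, R₀ x = Real.sqrt ((∑ i, x i ^ 2) + ε ^ 2))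
    (u : (Fin 3 → ℝ) → (Fin 3 → ℝ))
    (hu : ∀ x i, u x i = (1 / (8 * Real.pi * μ)) *
        ((1 / R₀ x + ε ^ 2 / R₀ x ^ 3) * f i
          + (∑ j, f j * x j) * x i / R₀ x ^ 3)) :
    ∀ x : Fin 3 → ℝ,
      (∑ i, fderiv ℝ (fun y => u y i) x (Pi.single i 1)) = 0 := by
  intro x
  set c := 1 / (8 * Real.pi * μ)
  clear_value c
  have hpos : 0 < ∑ j, x j ^ 2 + ε ^ 2 := by positivity
  have hu' : u = isotropicTensorField
      (fun t => c * ((√(t + ε ^ 2) ^ 1)⁻¹ + ε ^ 2 * (√(t + ε ^ 2) ^ 3)⁻¹))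
      (fun t => c * (√(t + ε ^ 2) ^ 3)⁻¹) f := by
    funext y i
    rw [hu, hR, isotropicTensorField]
    ring
  have hA : HasDerivAt
      (fun t => c * ((√(t + ε ^ 2) ^ 1)⁻¹ + ε ^ 2 * (√(t + ε ^ 2) ^ 3)⁻¹)) _ (∑ j, x j ^ 2) :=
    (((hasDerivAt_inv_sqrt_pow 1 hpos).add
      ((hasDerivAt_inv_sqrt_pow 3 hpos).const_mul (ε ^ 2))).const_mul c).comp_add_const _ (ε ^ 2)
  have hB : HasDerivAt (fun t => c * (√(t + ε ^ 2) ^ 3)⁻¹) _ (∑ j, x j ^ 2) :=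
    ((hasDerivAt_inv_sqrt_pow 3 hpos).const_mul c).comp_add_const _ (ε ^ 2)
  change divergence u x = 0
  rw [hu', divergence_isotropicTensorField hA hB]
  refine mul_eq_zero_of_right _ ?_
  generalize ∑ j, x j ^ 2 = q at hpos ⊢
  have hR2 : √(q + ε ^ 2) ^ 2 = q + ε ^ 2 := Real.sq_sqrt hpos.le
  have hr : 0 < √(q + ε ^ 2) := Real.sqrt_pos.2 hpos
  generalize √(q + ε ^ 2) = r at hR2 hr ⊢
  field_simp
  push_cast
  linear_combination 3 * c * r ^ 6 * hR2

/-- The regularized Stokeslet velocity field is divergence-free on ℝ³. -/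
theorem regularized_stokeslet_div_free
    (μ ε : ℝ) (hμ : 0 < μ) (hε : 0 < ε) (f : Fin 3 → ℝ)
    (R₀ : (Fin 3 → ℝ) → ℝ)
    (hR : ∀ x, R₀ x = Real.sqrt ((∑ i, x i ^ 2) + ε ^ 2))
    (u : (Fin 3 → ℝ) → (Fin 3 → ℝ))
    (hu : ∀ x i, u x i = (1 / (8 * Real.pi * μ)) *
        ((1 / R₀ x + ε ^ 2 / R₀ x ^ 3) * f i
          + (∑ j, f j * x j) * x i / R₀ x ^ 3)) :
    ∀ x : Fin 3 → ℝ,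
      (∑ i, fderiv ℝ (fun y => u y i) x (Pi.single i 1)) = 0 :=
  regularized_stokeslet_div_free_general μ ε hε f R₀ hR u hu
end

section
/- The curl of the regularized Stokeslet field G(x) = 8πμ u(x) = (1/R₀ + ε²/R₀³) f + ((f·x)x)/R₀³ equals the regularized rotlet: ∇ × G = −(2/R₀³ + 3ε²/R₀⁵)(x × f) = (2/R₀³ + 3ε²/R₀⁵)(f × x). -/
open scoped BigOperators

lemma curl_entry (ε : ℝ) (hε : 0 < ε) (f x : Fin 3 → ℝ) (i k : Fin 3) :
    fderiv ℝ (fun y : Fin 3 → ℝ =>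
        (1 / Real.sqrt ((∑ j, y j ^ 2) + ε ^ 2)
          + ε ^ 2 / Real.sqrt ((∑ j, y j ^ 2) + ε ^ 2) ^ 3) * f i
        + (∑ j, f j * y j) * y i / Real.sqrt ((∑ j, y j ^ 2) + ε ^ 2) ^ 3)
      x (Pi.single k 1)
    = (-(Real.sqrt ((∑ j, x j ^ 2) + ε ^ 2) ^ 2)⁻¹
        - 3 * ε ^ 2 * (Real.sqrt ((∑ j, x j ^ 2) + ε ^ 2) ^ 4)⁻¹)
        * (x k / Real.sqrt ((∑ j, x j ^ 2) + ε ^ 2)) * f i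
      + (f k * x i + (∑ j, f j * x j) * (if i = k then 1 else 0))
          / Real.sqrt ((∑ j, x j ^ 2) + ε ^ 2) ^ 3
      + (∑ j, f j * x j) * x i * (-3 / Real.sqrt ((∑ j, x j ^ 2) + ε ^ 2) ^ 4)
          * (x k / Real.sqrt ((∑ j, x j ^ 2) + ε ^ 2)) := by
  set S : (Fin 3 → ℝ) → ℝ := fun y => (∑ j, y j ^ 2) + ε ^ 2 with hSdef
  rw [show ((∑ j, x j ^ 2) + ε ^ 2 : ℝ) = S x from rfl]
  have hSx : 0 < S x := by
    have : (0:ℝ) ≤ ∑ j, x j ^ 2 := Finset.sum_nonneg fun j _ => sq_nonneg _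
    simp only [hSdef]; positivity
  set r : ℝ := Real.sqrt (S x) with hrdef
  have hrpos : 0 < r := Real.sqrt_pos.mpr hSx
  have hrne : r ≠ 0 := ne_of_gt hrpos
  set L1 : (Fin 3 → ℝ) →L[ℝ] ℝ :=
    ∑ j : Fin 3, ((2:ℝ) * x j) • (ContinuousLinearMap.proj j) with hL1def
  have hS : HasFDerivAt S L1 x := by
    have h1 : HasFDerivAt (fun y : Fin 3 → ℝ => ∑ j, y j ^ 2) L1 x := by
      refine HasFDerivAt.fun_sum fun j _ => ?_
      exact (hasDerivAt_pow 2 (x j)).comp_hasFDerivAt (f := fun y : Fin 3 → ℝ => y j) x (hasFDerivAt_apply j x)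
        |>.congr_fderiv (by norm_num)
    exact h1.add_const _
  have hr' : HasFDerivAt (fun y => Real.sqrt (S y)) ((1 / (2 * r)) • L1) x := by
    have := (Real.hasDerivAt_sqrt hSx.ne').comp_hasFDerivAt x hS
    simpa [Function.comp_def] using this
  have hA : HasDerivAt (fun t : ℝ => t⁻¹ + ε ^ 2 * (t ^ 3)⁻¹)
      (-(r ^ 2)⁻¹ + ε ^ 2 * (-(3 * r ^ 2) / (r ^ 3) ^ 2)) r := by
    have h1 := hasDerivAt_inv hrne
    have h2 := ((hasDerivAt_pow 3 r).inv (pow_ne_zero 3 hrne)).const_mul (ε ^ 2)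
    have h3 := h1.add h2
    exact h3.congr_deriv (by norm_num)
  have hAr : HasFDerivAt
      (fun y => (Real.sqrt (S y))⁻¹ + ε ^ 2 * ((Real.sqrt (S y)) ^ 3)⁻¹)
      ((-(r ^ 2)⁻¹ + ε ^ 2 * (-(3 * r ^ 2) / (r ^ 3) ^ 2)) • ((1 / (2 * r)) • L1)) x := by
    have := hA.comp_hasFDerivAt x hr'
    simpa [Function.comp_def] using this
  have hBr : HasFDerivAt (fun y => ((Real.sqrt (S y)) ^ 3)⁻¹)
      ((-(3 * r ^ 2) / (r ^ 3) ^ 2) • ((1 / (2 * r)) • L1)) x := by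
    have hB : HasDerivAt (fun t : ℝ => (t ^ 3)⁻¹) (-(3 * r ^ 2) / (r ^ 3) ^ 2) r := by
      have := (hasDerivAt_pow 3 r).inv (pow_ne_zero 3 hrne)
      exact this.congr_deriv (by norm_num)
    have := hB.comp_hasFDerivAt x hr'
    simpa [Function.comp_def] using this
  set L2 : (Fin 3 → ℝ) →L[ℝ] ℝ :=
    ∑ j : Fin 3, (f j) • (ContinuousLinearMap.proj j) with hL2def
  have hdot : HasFDerivAt (fun y : Fin 3 → ℝ => ∑ j, f j * y j) L2 x := by
    refine HasFDerivAt.fun_sum fun j _ => ?_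
    exact ((hasFDerivAt_apply j x).const_mul (f j))
  have hproj : HasFDerivAt (fun y : Fin 3 → ℝ => y i)
      (ContinuousLinearMap.proj i : (Fin 3 → ℝ) →L[ℝ] ℝ) x := hasFDerivAt_apply i x
  have htot := (hAr.mul_const (f i)).fun_add (((hdot.fun_mul hproj).fun_mul hBr))
  have hL1v : L1 (Pi.single k 1) = 2 * x k := by
    simp [hL1def, Pi.single_apply, Finset.sum_ite_eq]
  have hL2v : L2 (Pi.single k 1) = f k := by
    simp [hL2def, Pi.single_apply, Finset.sum_ite_eq]
  have hpv : (ContinuousLinearMap.proj i : (Fin 3 → ℝ) →L[ℝ] ℝ) (Pi.single k 1)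
      = if i = k then 1 else 0 := by
    simp [Pi.single_apply, eq_comm]
  rw [show (fun y : Fin 3 → ℝ =>
        (1 / Real.sqrt ((∑ j, y j ^ 2) + ε ^ 2)
          + ε ^ 2 / Real.sqrt ((∑ j, y j ^ 2) + ε ^ 2) ^ 3) * f i
        + (∑ j, f j * y j) * y i / Real.sqrt ((∑ j, y j ^ 2) + ε ^ 2) ^ 3)
      = (fun y : Fin 3 → ℝ =>
        ((Real.sqrt (S y))⁻¹ + ε ^ 2 * ((Real.sqrt (S y)) ^ 3)⁻¹) * f i
        + ((∑ j, f j * y j) * y i) * ((Real.sqrt (S y)) ^ 3)⁻¹) from by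
      funext y; simp [hSdef, div_eq_mul_inv], htot.fderiv]
  rw [← hrdef]
  simp only [ContinuousLinearMap.add_apply, ContinuousLinearMap.coe_smul',
    Pi.smul_apply, smul_eq_mul, hL1v, hL2v, hpv]
  clear_value r
  rcases eq_or_ne i k with h | h
  · subst h
    simp only [if_pos rfl]
    field_simp
    ring
  · simp only [if_neg h, if_neg (Ne.symm h)]
    field_simp
    ring

/-- The curl of G(x) = (1/R₀ + ε²/R₀³) f + (f·x)x/R₀³ is the regularized rotlet
    (2/R₀³ + 3ε²/R₀⁵)(f × x). -/
theorem regularized_stokeslet_curl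
    (ε : ℝ) (hε : 0 < ε) (f : Fin 3 → ℝ)
    (R₀ : (Fin 3 → ℝ) → ℝ)
    (hR : ∀ x, R₀ x = Real.sqrt ((∑ i, x i ^ 2) + ε ^ 2))
    (G : (Fin 3 → ℝ) → (Fin 3 → ℝ))
    (hG : ∀ x i, G x i = (1 / R₀ x + ε ^ 2 / R₀ x ^ 3) * f i
          + (∑ j, f j * x j) * x i / R₀ x ^ 3) :
    ∀ x : Fin 3 → ℝ,
      (![fderiv ℝ (fun y => G y 2) x (Pi.single 1 1)
            - fderiv ℝ (fun y => G y 1) x (Pi.single 2 1),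
         fderiv ℝ (fun y => G y 0) x (Pi.single 2 1)
            - fderiv ℝ (fun y => G y 2) x (Pi.single 0 1),
         fderiv ℝ (fun y => G y 1) x (Pi.single 0 1)
            - fderiv ℝ (fun y => G y 0) x (Pi.single 1 1)] : Fin 3 → ℝ)
        = (2 / R₀ x ^ 3 + 3 * ε ^ 2 / R₀ x ^ 5) • (crossProduct f x) := by
  intro x
  have hfun : ∀ i : Fin 3, (fun y => G y i) = (fun y : Fin 3 → ℝ =>
      (1 / Real.sqrt ((∑ j, y j ^ 2) + ε ^ 2)
        + ε ^ 2 / Real.sqrt ((∑ j, y j ^ 2) + ε ^ 2) ^ 3) * f i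
      + (∑ j, f j * y j) * y i / Real.sqrt ((∑ j, y j ^ 2) + ε ^ 2) ^ 3) := by
    intro i; funext y; rw [hG, hR]
  rw [hfun 0, hfun 1, hfun 2,
    curl_entry ε hε f x 2 1, curl_entry ε hε f x 1 2,
    curl_entry ε hε f x 0 2, curl_entry ε hε f x 2 0,
    curl_entry ε hε f x 1 0, curl_entry ε hε f x 0 1, hR x]
  have hSx : (0:ℝ) < (∑ j, x j ^ 2) + ε ^ 2 := by
    have : (0:ℝ) ≤ ∑ j, x j ^ 2 := Finset.sum_nonneg fun j _ => sq_nonneg _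
    positivity
  set r : ℝ := Real.sqrt ((∑ j, x j ^ 2) + ε ^ 2) with hrdef
  have hrpos : 0 < r := Real.sqrt_pos.mpr hSx
  have hrne : r ≠ 0 := ne_of_gt hrpos
  clear_value r
  have hcross : (crossProduct f x : Fin 3 → ℝ)
      = ![f 1 * x 2 - f 2 * x 1, f 2 * x 0 - f 0 * x 2, f 0 * x 1 - f 1 * x 0] := by
    simp [crossProduct]
  rw [hcross]
  funext idx
  fin_cases idx <;>
    simp only [Fin.zero_eta, Fin.mk_one, Fin.reduceFinMk, Matrix.cons_val_zero,
      Matrix.cons_val_one, Matrix.head_cons, Matrix.cons_val_two, Matrix.tail_cons,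
      Pi.smul_apply, smul_eq_mul, mul_zero, add_zero,
      show ((2:Fin 3) = 1) = False from by simp,
      show ((1:Fin 3) = 2) = False from by simp, show ((0:Fin 3) = 2) = False from by simp,
      show ((2:Fin 3) = 0) = False from by simp, show ((1:Fin 3) = 0) = False from by simp,
      show ((0:Fin 3) = 1) = False from by simp, if_false] <;>
    (field_simp; ring)
end
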